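/- arXiv:2203.04054 — 5 statements merged into one kernel-verified Lean document; each statement's English description precedes it below -/
import Mathlib

section
/- Let T^n be the flat torus with metric ϱ as above and p ≥ 1. Two measures μ, ν ∈ W_p(T^n) satisfy W_p(μ,ν) = √n/2 (the diameter) if and only if μ = δ_x and ν = δ_y for some pair of antipodal points x, y (i.e. y = x + (1/2,...,1/2) mod 1). -/
open MeasureTheory Filter

/-- The `p`-Wasserstein distance with cost function `c` (the distance of the
underlying space): infimum over couplings of `∫ c(x,y)^p dπ`, to the power `1/p`. -/
noncomputable def wassersteinDist {X : Type*} [MeasurableSpace X]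
    (c : X → X → ℝ) (p : ℝ) (μ ν : Measure X) : ℝ :=
  sInf {r : ℝ | ∃ π : Measure (X × X), IsProbabilityMeasure π ∧
      π.map Prod.fst = μ ∧ π.map Prod.snd = ν ∧
      r = ∫ q, c q.1 q.2 ^ p ∂π} ^ (1 / p)

/-- The flat `n`-dimensional torus `ℝ^n/ℤ^n`. -/
abbrev Torus (n : ℕ) := Fin n → AddCircle (1 : ℝ)

/-- The flat (ℓ²) metric on the torus: each coordinate distance is the
distance `|(x_k - y_k) mod 1|` on `ℝ/ℤ`. -/
noncomputable def torusDist {n : ℕ} (x y : Torus n) : ℝ :=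
  Real.sqrt (∑ k, dist (x k) (y k) ^ 2)

/-- The antipodal point of `x` in the flat torus: `x + (1/2, …, 1/2)`. -/
noncomputable def torusAntipode {n : ℕ} (x : Torus n) : Torus n :=
  fun k => x k + ((1 / 2 : ℝ) : AddCircle (1 : ℝ))


/-!
On `ℝ/ℤ` every distance is at most `1/2`, with equality exactly between antipodal points, so
`ϱ ≤ √n/2` on `𝕋ⁿ` with equality exactly between antipodal points. As the cost is bounded by
the diameter, `W_p(μ, ν) = √n/2` forces every coupling, in particular `μ ⊗ ν`, to be carried by
the graph of the antipodal map; a product measure carried by the graph of an injective map is a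
product of Dirac masses. Conversely, the only coupling of two Dirac masses is the Dirac mass at
the pair.
-/

namespace AddCircle

variable {p : ℝ}

theorem neg_coe_half_period : -(↑(p / 2) : AddCircle p) = ↑(p / 2) := by
  rw [neg_eq_iff_add_eq_zero, ← coe_add, add_halves, coe_period]

theorem norm_eq_half_period_iff (hp : 0 < p) {z : AddCircle p} :
    ‖z‖ = p / 2 ↔ z = ↑(p / 2) := by
  refine ⟨fun hz => ?_, fun hz => by rw [hz, norm_half_period_eq, abs_of_pos hp]⟩
  induction z using QuotientAddGroup.induction_on with
  | H x =>
    obtain ⟨y, rfl⟩ : ∃ y, x = p * y := ⟨p⁻¹ * x, by field_simp⟩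
    have hy : |y - round y| = 1 / 2 := by
      rw [norm_eq' p hp, inv_mul_cancel_left₀ hp.ne'] at hz
      nlinarith
    -- `y - round y` lies in `[-1/2, 1/2)`, so its absolute value is `1/2` only at `-1/2`
    have hy' : y - round y = -(1 / 2) := by
      have := sub_half_lt_round y
      rcases abs_eq (by norm_num : (0 : ℝ) ≤ 1 / 2) |>.mp hy with h | h
      · linarith
      · exact h
    rw [← sub_eq_zero, ← coe_sub, coe_eq_zero_iff]
    refine ⟨round y - 1, ?_⟩
    rw [zsmul_eq_mul]
    push_cast
    linear_combination -p * hy'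

theorem dist_le_half_period (hp : 0 < p) (a b : AddCircle p) : dist a b ≤ p / 2 := by
  simpa [dist_eq_norm, abs_of_pos hp] using norm_le_half_period p hp.ne' (x := a - b)

theorem dist_eq_half_period_iff (hp : 0 < p) {a b : AddCircle p} :
    dist a b = p / 2 ↔ b = a + ↑(p / 2) := by
  rw [dist_eq_norm, norm_eq_half_period_iff hp, ← sub_eq_iff_eq_add', ← neg_sub,
    neg_eq_iff_eq_neg, neg_coe_half_period]

end AddCircle

namespace MeasureTheory.Measure

variable {α β : Type*} [MeasurableSpace α] [MeasurableSpace β]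

theorem eq_dirac_of_ae_eq {μ : Measure α} [IsProbabilityMeasure μ] {a : α}
    (h : ∀ᵐ x ∂μ, x = a) : μ = dirac a :=
  calc μ = μ.map id := map_id.symm
    _ = μ.map (fun _ => a) := map_congr h
    _ = dirac a := by simp [map_const]

theorem eq_dirac_of_map_fst_of_map_snd [MeasurableSingletonClass α]
    [MeasurableSingletonClass β] {π : Measure (α × β)} [IsProbabilityMeasure π] {a : α} {b : β}
    (hfst : π.map Prod.fst = dirac a) (hsnd : π.map Prod.snd = dirac b) :
    π = dirac (a, b) := by
  have ha : ∀ᵐ q ∂π, q.1 = a := ae_of_ae_map (p := (· = a)) measurable_fst.aemeasurable <| by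
    rw [hfst, ae_dirac_eq]; exact eventually_pure.mpr rfl
  have hb : ∀ᵐ q ∂π, q.2 = b := ae_of_ae_map (p := (· = b)) measurable_snd.aemeasurable <| by
    rw [hsnd, ae_dirac_eq]; exact eventually_pure.mpr rfl
  refine eq_dirac_of_ae_eq ?_
  filter_upwards [ha, hb] with q hqa hqb using Prod.ext hqa hqb

theorem exists_eq_dirac_of_ae_prod_eq [MeasurableSingletonClass β]
    {μ : Measure α} {ν : Measure β} [IsProbabilityMeasure μ] [IsProbabilityMeasure ν]
    {f : α → β} (hf : Function.Injective f) (h : ∀ᵐ q ∂μ.prod ν, q.2 = f q.1) :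
    ∃ x, μ = dirac x ∧ ν = dirac (f x) := by
  have h' := ae_ae_of_ae_prod h
  obtain ⟨x₀, hx₀⟩ := h'.exists
  have hν := eq_dirac_of_ae_eq (a := f x₀) hx₀
  refine ⟨x₀, eq_dirac_of_ae_eq ?_, hν⟩
  rw [hν, ae_dirac_eq] at h'
  filter_upwards [h'] with x hx using hf (eventually_pure.mp hx).symm

end MeasureTheory.Measure

theorem csInf_eq_iff_forall_eq_of_forall_le {α : Type*} [ConditionallyCompleteLattice α]
    {s : Set α} {a : α} (hne : s.Nonempty) (hbdd : BddBelow s) (hle : ∀ r ∈ s, r ≤ a) :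
    sInf s = a ↔ ∀ r ∈ s, r = a :=
  ⟨fun h r hr => le_antisymm (hle r hr) (h ▸ csInf_le hbdd hr),
    fun h => le_antisymm (hne.elim fun r hr => h r hr ▸ csInf_le hbdd hr)
      (le_csInf hne fun r hr => (h r hr).ge)⟩

theorem MeasureTheory.integral_eq_const_iff_of_le {α : Type*} [MeasurableSpace α]
    {π : Measure α} [IsProbabilityMeasure π] {f : α → ℝ} {a : ℝ} (hf : Integrable f π)
    (hle : ∀ x, f x ≤ a) : ∫ x, f x ∂π = a ↔ ∀ᵐ x ∂π, f x = a := by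
  have h := integral_eq_iff_of_ae_le hf (integrable_const a) (ae_of_all π hle)
  simp only [integral_const, probReal_univ, one_smul] at h
  exact h

section Wasserstein

variable {X : Type*} [MeasurableSpace X] {c : X → X → ℝ} {p M : ℝ}

theorem wassersteinDist_eq_iff_ae_eq (hp : 0 < p) (hM : 0 ≤ M)
    (hc : Measurable fun q : X × X => c q.1 q.2) (hc0 : ∀ x y, 0 ≤ c x y)
    (hcM : ∀ x y, c x y ≤ M) (μ ν : Measure X) [IsProbabilityMeasure μ] [IsProbabilityMeasure ν] :
    wassersteinDist c p μ ν = M ↔ ∀ π : Measure (X × X), IsProbabilityMeasure π →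
      π.map Prod.fst = μ → π.map Prod.snd = ν → ∀ᵐ q ∂π, c q.1 q.2 = M := by
  set S := {r : ℝ | ∃ π : Measure (X × X), IsProbabilityMeasure π ∧
      π.map Prod.fst = μ ∧ π.map Prod.snd = ν ∧ r = ∫ q, c q.1 q.2 ^ p ∂π}
  have hcp_le : ∀ q : X × X, c q.1 q.2 ^ p ≤ M ^ p := fun q =>
    Real.rpow_le_rpow (hc0 _ _) (hcM _ _) hp.le
  have hcp_int : ∀ π : Measure (X × X), IsProbabilityMeasure π →
      Integrable (fun q => c q.1 q.2 ^ p) π := fun π _ =>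
    Integrable.of_bound (hc.pow_const p).aestronglyMeasurable (M ^ p) <| ae_of_all _ fun q => by
      rw [Real.norm_of_nonneg (Real.rpow_nonneg (hc0 _ _) p)]; exact hcp_le q
  have hcost : ∀ π : Measure (X × X), IsProbabilityMeasure π →
      (∫ q, c q.1 q.2 ^ p ∂π = M ^ p ↔ ∀ᵐ q ∂π, c q.1 q.2 = M) := fun π hπ => by
    rw [integral_eq_const_iff_of_le (hcp_int π hπ) hcp_le]
    simp only [Real.rpow_left_inj (hc0 _ _) hM hp.ne']
  have hS_nonneg : ∀ r ∈ S, 0 ≤ r := by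
    rintro r ⟨π, -, -, -, rfl⟩
    exact integral_nonneg fun q => Real.rpow_nonneg (hc0 _ _) p
  have hS_le : ∀ r ∈ S, r ≤ M ^ p := by
    rintro r ⟨π, hπ, -, -, rfl⟩
    simpa using integral_mono (hcp_int π hπ) (integrable_const (M ^ p)) hcp_le
  have hS_ne : S.Nonempty := ⟨_, μ.prod ν, inferInstance, Measure.fst_prod, Measure.snd_prod, rfl⟩
  calc wassersteinDist c p μ ν = M ↔ sInf S = M ^ p := by
        rw [wassersteinDist, one_div, Real.rpow_inv_eq (Real.sInf_nonneg hS_nonneg) hM hp.ne']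
    _ ↔ ∀ r ∈ S, r = M ^ p :=
        csInf_eq_iff_forall_eq_of_forall_le hS_ne ⟨0, hS_nonneg⟩ hS_le
    _ ↔ _ := by
        refine ⟨fun h π hπ h1 h2 => (hcost π hπ).mp (h _ ⟨π, hπ, h1, h2, rfl⟩), ?_⟩
        rintro h r ⟨π, hπ, h1, h2, rfl⟩
        exact (hcost π hπ).mpr (h π hπ h1 h2)

end Wasserstein

section Torus

variable {n : ℕ}

theorem torusDist_nonneg (x y : Torus n) : 0 ≤ torusDist x y :=
  Real.sqrt_nonneg _

theorem measurable_torusDist : Measurable fun q : Torus n × Torus n => torusDist q.1 q.2 := by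
  unfold torusDist
  fun_prop

theorem torusAntipode_injective : Function.Injective (torusAntipode (n := n)) :=
  add_left_injective fun _ => ((1 / 2 : ℝ) : AddCircle (1 : ℝ))

theorem sqrt_sum_half_sq : √(∑ _k : Fin n, (1 / 2 : ℝ) ^ 2) = √n / 2 := by
  rw [Finset.sum_const, Finset.card_univ, Fintype.card_fin, nsmul_eq_mul, Real.sqrt_mul',
    Real.sqrt_sq, mul_one_div] <;> norm_num

theorem torusDist_le_sqrt_div_two (x y : Torus n) : torusDist x y ≤ √n / 2 := by
  rw [torusDist, ← sqrt_sum_half_sq]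
  gcongr with k
  exact AddCircle.dist_le_half_period one_pos _ _

theorem torusDist_eq_sqrt_div_two_iff (x y : Torus n) :
    torusDist x y = √n / 2 ↔ y = torusAntipode x := by
  rw [torusDist, ← sqrt_sum_half_sq,
    Real.sqrt_inj (Finset.sum_nonneg fun _ _ => sq_nonneg _)
      (Finset.sum_nonneg fun _ _ => by positivity),
    Finset.sum_eq_sum_iff_of_le fun _ _ =>
      pow_le_pow_left₀ dist_nonneg (AddCircle.dist_le_half_period one_pos _ _) 2]
  simp only [Finset.mem_univ, true_implies,
    pow_left_inj₀ dist_nonneg (by norm_num : (0 : ℝ) ≤ 1 / 2) two_ne_zero,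
    AddCircle.dist_eq_half_period_iff one_pos, funext_iff, torusAntipode]

end Torus

/-- Two measures in `W_p(𝕋ⁿ)` are at the maximal distance `√n / 2` if and only
if they are Dirac measures concentrated on antipodal points. -/
theorem wasserstein_torus_dist_eq_diam_iff (n : ℕ) {p : ℝ} (hp : 1 ≤ p)
    (μ ν : Measure (Torus n)) (hμ : IsProbabilityMeasure μ) (hν : IsProbabilityMeasure ν) :
    wassersteinDist torusDist p μ ν = Real.sqrt n / 2 ↔
      ∃ x : Torus n, μ = Measure.dirac x ∧ ν = Measure.dirac (torusAntipode x) := by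
  rw [wassersteinDist_eq_iff_ae_eq (by linarith) (by positivity) measurable_torusDist
    torusDist_nonneg torusDist_le_sqrt_div_two μ ν]
  simp only [torusDist_eq_sqrt_div_two_iff]
  constructor
  · intro h
    exact Measure.exists_eq_dirac_of_ae_prod_eq torusAntipode_injective
      (h _ inferInstance Measure.fst_prod Measure.snd_prod)
  · rintro ⟨x, rfl, rfl⟩ π _ hfst hsnd
    rw [Measure.eq_dirac_of_map_fst_of_map_snd hfst hsnd, ae_dirac_eq]
    exact eventually_pure.mpr rfl
end

section
/- Let μ, ν be Borel probability measures on the one-dimensional torus T = R/Z. If the Wasserstein potentials coincide, i.e. ∫_T ϱ(x,y)^2 dμ(y) = ∫_T ϱ(x,y)^2 dν(y) for every x ∈ T (where ϱ(x,y) = |(x−y) mod 1| with representative in [-1/2,1/2)), then μ = ν. -/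
/-!
The potential `x ↦ ∫ ‖x - y‖² dμ(y)` is the convolution `c ⋆ μ` of `μ` with `c = ‖·‖²`, so its
`n`-th Fourier coefficient is `ĉ(n) μ̂(n)`. On a fundamental domain `c` is `x²` on `[-T/2, T/2]`,
whose Fourier coefficients never vanish: `ĉ(0)` is a positive mean, and for `n ≠ 0` integrating
by parts twice (the boundary terms of `x²` cancel, those of `x` do not) gives a nonzero multiple
of `1 / n²`. Hence equal potentials force `μ̂ = ν̂`, and a finite measure on the circle is
determined by its Fourier coefficients because trigonometric polynomials are dense in
`C(AddCircle T, ℂ)`.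
-/

open MeasureTheory Complex Set AddCircle
open scoped Real Interval

section IntervalCoefficients

variable {a b : ℝ} (hab : a < b) {n : ℤ}

theorem fourierCoeffOn_of_hasDerivAt_of_eq (hn : n ≠ 0) {f f' : ℝ → ℂ}
    (hf : ∀ x ∈ [[a, b]], HasDerivAt f (f' x) x) (hf' : IntervalIntegrable f' volume a b)
    (hfab : f a = f b) :
    fourierCoeffOn hab f n = (b - a) / (2 * π * I * n) * fourierCoeffOn hab f' n := by
  rw [fourierCoeffOn_of_hasDerivAt hab hn hf hf', hfab, sub_self, mul_zero, zero_sub]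
  field_simp [hn, Real.pi_ne_zero, I_ne_zero]

theorem fourierCoeffOn_const (hn : n ≠ 0) (c : ℂ) : fourierCoeffOn hab (fun _ ↦ c) n = 0 := by
  rw [fourierCoeffOn_of_hasDerivAt_of_eq hab hn (fun x _ ↦ hasDerivAt_const x c)
    intervalIntegrable_const rfl]
  simp [fourierCoeffOn_eq_integral]

theorem fourierCoeffOn_ofReal_ne_zero (hn : n ≠ 0) :
    fourierCoeffOn hab (fun x : ℝ ↦ (x : ℂ)) n ≠ 0 := by
  have hder (x : ℝ) (_ : x ∈ [[a, b]]) : HasDerivAt (fun y : ℝ ↦ (y : ℂ)) 1 x :=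
    (hasDerivAt_id x).ofReal_comp
  have hba : (b : ℂ) - a ≠ 0 := sub_ne_zero.mpr (ofReal_injective.ne hab.ne')
  rw [fourierCoeffOn_of_hasDerivAt hab hn hder intervalIntegrable_const,
    fourierCoeffOn_const hab hn, mul_zero, sub_zero]
  simp [hn, Real.pi_ne_zero, I_ne_zero, hba]

theorem fourierCoeffOn_ofReal_sq_ne_zero (hsq : a ^ 2 = b ^ 2) (n : ℤ) :
    fourierCoeffOn hab (fun x : ℝ ↦ (x : ℂ) ^ 2) n ≠ 0 := by
  rcases eq_or_ne n 0 with rfl | hn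
  · have hba : b - a ≠ 0 := sub_ne_zero.mpr hab.ne'
    have hcube : b ^ 3 - a ^ 3 ≠ 0 := sub_ne_zero.mpr (Odd.strictMono_pow (by decide) hab).ne'
    rw [fourierCoeffOn_eq_integral]
    simp only [neg_zero, fourier_zero, one_smul, ← ofReal_pow, intervalIntegral.integral_ofReal,
      integral_pow]
    norm_num
    exact ⟨mod_cast hba, mod_cast hcube⟩
  · have hder (x : ℝ) (_ : x ∈ [[a, b]]) : HasDerivAt (fun y : ℝ ↦ (y : ℂ) ^ 2) (2 * x) x := by
      simpa using (hasDerivAt_pow 2 x).ofReal_comp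
    have hint : IntervalIntegrable (fun x : ℝ ↦ 2 * (x : ℂ)) volume a b :=
      (continuous_const.mul continuous_ofReal).intervalIntegrable _ _
    rw [fourierCoeffOn_of_hasDerivAt_of_eq hab hn hder hint (by simp [← ofReal_pow, hsq]),
      fourierCoeffOn.const_mul]
    refine mul_ne_zero ?_ (mul_ne_zero two_ne_zero (fourierCoeffOn_ofReal_ne_zero hab hn))
    simp [hn, Real.pi_ne_zero, I_ne_zero, sub_eq_zero, hab.ne']

end IntervalCoefficients

namespace ContinuousMap

variable {X E : Type*} [TopologicalSpace X] [CompactSpace X] [MeasurableSpace X] [BorelSpace X]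
  [NormedAddCommGroup E] [NormedSpace ℝ E] [CompleteSpace E] [SecondCountableTopologyEither X E]
  (𝕜 : Type*) [NormedRing 𝕜] [Module 𝕜 E] [IsBoundedSMul 𝕜 E] [SMulCommClass ℝ 𝕜 E]
  (μ : Measure X) [IsFiniteMeasure μ]

noncomputable def integralCLM : C(X, E) →L[𝕜] E :=
  (L1.integralCLM' 𝕜).comp (toLp 1 μ 𝕜)

theorem integralCLM_apply (f : C(X, E)) : integralCLM 𝕜 μ f = ∫ x, f x ∂μ := by
  rw [integralCLM, ContinuousLinearMap.comp_apply, ← L1.integral_eq', L1.integral_eq_integral]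
  exact integral_congr_ae (coeFn_toLp μ f)

end ContinuousMap

namespace AddCircle

variable {T : ℝ}

theorem fourier_add_apply (n : ℤ) (x y : AddCircle T) :
    fourier n (x + y) = fourier n x * fourier n y := by
  rw [fourier_apply, fourier_apply, fourier_apply, smul_add, toCircle_add, Circle.coe_mul]

variable [hT : Fact (0 < T)]

theorem fourierCoeff_integral_comp_sub {c : AddCircle T → ℂ} (hc : Continuous c)
    (μ : Measure (AddCircle T)) [IsFiniteMeasure μ] (n : ℤ) :
    fourierCoeff (fun x ↦ ∫ y, c (x - y) ∂μ) n = fourierCoeff c n * ∫ y, fourier (-n) y ∂μ := by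
  have hint : Integrable (Function.uncurry fun x y ↦ fourier (-n) x * c (x - y))
      (haarAddCircle.prod μ) :=
    (by fun_prop : Continuous _).integrable_of_hasCompactSupport (.of_compactSpace _)
  have htranslate (y : AddCircle T) :
      ∫ x, fourier (-n) x * c (x - y) ∂haarAddCircle = fourierCoeff c n * fourier (-n) y := by
    rw [← integral_add_right_eq_self _ y, fourierCoeff, ← integral_mul_const]
    simp_rw [add_sub_cancel_right, fourier_add_apply, smul_eq_mul, mul_right_comm]
  calc fourierCoeff (fun x ↦ ∫ y, c (x - y) ∂μ) n
      = ∫ x, ∫ y, fourier (-n) x * c (x - y) ∂μ ∂haarAddCircle := by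
        simp_rw [fourierCoeff, smul_eq_mul, integral_const_mul]
    _ = ∫ y, ∫ x, fourier (-n) x * c (x - y) ∂haarAddCircle ∂μ := integral_integral_swap hint
    _ = fourierCoeff c n * ∫ y, fourier (-n) y ∂μ := by
        simp_rw [htranslate, integral_const_mul]

theorem measure_ext_of_integral_fourier_eq {μ ν : Measure (AddCircle T)} [IsFiniteMeasure μ]
    [IsFiniteMeasure ν] (h : ∀ n : ℤ, ∫ x, fourier n x ∂μ = ∫ x, fourier n x ∂ν) : μ = ν := by
  have hclm : ContinuousMap.integralCLM ℂ μ = ContinuousMap.integralCLM (E := ℂ) ℂ ν := by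
    refine ContinuousLinearMap.ext_on
      (Submodule.dense_iff_topologicalClosure_eq_top.mpr span_fourier_closure_eq_top) ?_
    rintro _ ⟨n, rfl⟩
    simpa only [ContinuousMap.integralCLM_apply] using h n
  refine ext_of_forall_integral_eq_of_IsFiniteMeasure fun f ↦ ?_
  have hf := congr($hclm ⟨fun x ↦ (f x : ℂ), by fun_prop⟩)
  simp only [ContinuousMap.integralCLM_apply, ContinuousMap.coe_mk] at hf
  exact_mod_cast hf

theorem ofReal_norm_sq_eq_liftIoc :
    (fun x : AddCircle T ↦ ((‖x‖ ^ 2 : ℝ) : ℂ)) = liftIoc T (-(T / 2)) (fun x ↦ (x : ℂ) ^ 2) := by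
  funext x
  obtain ⟨y, hy, rfl⟩ : ∃ y ∈ Ioc (-(T / 2)) (-(T / 2) + T), (y : AddCircle T) = x :=
    ⟨_, (equivIoc T (-(T / 2)) x).2, (equivIoc T (-(T / 2))).symm_apply_apply x⟩
  have hy' : |y| ≤ |T| / 2 := by
    rw [abs_of_pos hT.out, abs_le]
    constructor <;> linarith [hy.1, hy.2]
  rw [liftIoc_coe_apply hy, (norm_coe_eq_abs_iff T hT.out.ne').mpr hy', sq_abs, ofReal_pow]

theorem fourierCoeff_ofReal_norm_sq_ne_zero (n : ℤ) :
    fourierCoeff (fun x : AddCircle T ↦ ((‖x‖ ^ 2 : ℝ) : ℂ)) n ≠ 0 := by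
  rw [ofReal_norm_sq_eq_liftIoc, fourierCoeff_liftIoc_eq]
  exact fourierCoeffOn_ofReal_sq_ne_zero _ (by ring) n

end AddCircle

/-- On the one-dimensional torus `𝕋 = ℝ/ℤ` (with the flat metric
`ϱ(x,y) = |(x-y) mod 1|`), a Borel probability measure is determined by its
quadratic Wasserstein potential: if `∫ ϱ(x,y)² dμ(y) = ∫ ϱ(x,y)² dν(y)` for
every `x`, then `μ = ν`. -/
theorem measure_eq_of_potential_eq (μ ν : Measure (AddCircle (1 : ℝ)))
    (hμ : IsProbabilityMeasure μ) (hν : IsProbabilityMeasure ν)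
    (h : ∀ x : AddCircle (1 : ℝ),
      ∫ y, dist x y ^ 2 ∂μ = ∫ y, dist x y ^ 2 ∂ν) :
    μ = ν := by
  have : Fact ((0 : ℝ) < 1) := ⟨one_pos⟩
  set c : AddCircle (1 : ℝ) → ℂ := fun z ↦ ((‖z‖ ^ 2 : ℝ) : ℂ)
  have hc : Continuous c := by fun_prop
  have hpotential : (fun x ↦ ∫ y, c (x - y) ∂μ) = fun x ↦ ∫ y, c (x - y) ∂ν := by
    funext x
    simp only [c, ← dist_eq_norm]
    rw [integral_complex_ofReal, integral_complex_ofReal, h x]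
  refine measure_ext_of_integral_fourier_eq fun n ↦ ?_
  have hcoeff := congr(fourierCoeff $hpotential (-n))
  rw [fourierCoeff_integral_comp_sub hc, fourierCoeff_integral_comp_sub hc, neg_neg] at hcoeff
  exact mul_left_cancel₀ (fourierCoeff_ofReal_norm_sq_ne_zero _) hcoeff
end

section
/- Let n ≥ 2, p ≥ 1, x ∈ T^n, j ∈ {1,...,n}, and μ a Borel probability measure on T^n. For p = 1, lim_{s→0+} [T^1_μ(x + s e^j) − 2 T^1_μ(x) + T^1_μ(x − s e^j)]/s = 2 μ({x}) − ∫_{H(x + (1/2)e^j, j)} (1/4 + ϱ_{n−1}(x̌_j, y̌_j)^2)^{−1/2} dμ(y). -/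
open MeasureTheory Filter

/-- The `p`-Wasserstein potential of `μ` at `x`: `T^p_μ(x) = ∫ ϱ(x,y)^p dμ(y)`. -/
noncomputable def torusPotential {n : ℕ} (p : ℝ) (μ : MeasureTheory.Measure (Torus n))
    (x : Torus n) : ℝ :=
  ∫ y, torusDist x y ^ p ∂μ

/-- The point `x + s·e^j` on the torus. -/
noncomputable def torusShift {n : ℕ} (x : Torus n) (j : Fin n) (s : ℝ) : Torus n :=
  fun i => if i = j then x i + ((s : ℝ) : AddCircle (1 : ℝ)) else x i

/-- The "hyperplane" `H(z,j) = {y : y_j = z_j}`. -/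
def torusHyperplane {n : ℕ} (z : Torus n) (j : Fin n) : Set (Torus n) :=
  {y | y j = z j}

/-- The flat distance on `𝕋^{n-1}` between `x̌_j` and `y̌_j`, the points obtained
from `x` and `y` by dropping the `j`-th coordinate. -/
noncomputable def torusDistDrop {n : ℕ} (j : Fin n) (x y : Torus n) : ℝ :=
  Real.sqrt (∑ i ∈ Finset.univ.erase j, dist (x i) (y i) ^ 2)

/-!
With `u = y j - x j` and `r = torusDistDrop j x y`, the distance from `x + t e^j` to `y` is
`shiftProfile u r t = √(‖t - u‖² + r²)`, where `‖·‖` is the distance to `0` on `ℝ/ℤ`.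
This profile is smooth near `t = 0`, so its second difference quotient tends to `0`, except in
two cases: if `y = x` it equals `|t|` (limit `2`), and if `u = 1/2` it is even in `t` with right
derivative `-(1/2)(1/4 + r²)^(-1/2)` at `0`. Since `ϱ` is `1`-Lipschitz the quotients are bounded
by `2`, and dominated convergence integrates the pointwise limits against `μ`.
-/

open Topology Set

theorem HasDerivAt.tendsto_symmetric_second_diff_div {g : ℝ → ℝ} {g' x : ℝ}
    (hg : HasDerivAt g g' x) :
    Tendsto (fun s => (g (x + s) - 2 * g x + g (x - s)) / s) (𝓝[>] 0) (𝓝 0) := by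
  have hleft := (hg.tendsto_slope_zero_left).comp (neg_zero (G := ℝ) ▸ tendsto_neg_nhdsGT_neg)
  have := hg.tendsto_slope_zero_right.sub hleft
  rw [sub_self] at this
  refine this.congr fun s => ?_
  simp only [Function.comp_apply, smul_eq_mul, ← sub_eq_add_neg, inv_neg]
  ring

theorem hasDerivAt_sqrt_sub_sq_add {a c t : ℝ} (h : (t - a) ^ 2 + c ≠ 0) :
    HasDerivAt (fun t => √((t - a) ^ 2 + c)) ((t - a) / √((t - a) ^ 2 + c)) t := by
  have hq : HasDerivAt (fun t => (t - a) ^ 2 + c) (2 * (t - a)) t := by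
    simpa using ((hasDerivAt_id t).sub_const a).pow 2 |>.add_const c
  refine (hq.sqrt h).congr_deriv ?_
  field_simp

theorem AddCircle.norm_coe_one_eq_abs {t : ℝ} (ht : |t| ≤ 1 / 2) :
    ‖(t : AddCircle (1 : ℝ))‖ = |t| :=
  (AddCircle.norm_coe_eq_abs_iff 1 one_ne_zero).2 (by rwa [abs_one])

theorem AddCircle.neg_coe_one_half : -((1 / 2 : ℝ) : AddCircle (1 : ℝ)) = (1 / 2 : ℝ) := by
  rw [← AddCircle.coe_neg, ← AddCircle.coe_add_period]
  norm_num

theorem AddCircle.exists_coe_eq_abs_lt_half {u : AddCircle (1 : ℝ)}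
    (hu : u ≠ (1 / 2 : ℝ)) : ∃ a : ℝ, (a : AddCircle (1 : ℝ)) = u ∧ |a| < 1 / 2 := by
  obtain ⟨b, rfl⟩ := QuotientAddGroup.mk_surjective u
  have hcoe : ((b - round b : ℝ) : AddCircle (1 : ℝ)) = b := by
    rw [AddCircle.coe_sub]
    simp
  refine ⟨b - round b, hcoe, (abs_sub_round b).lt_of_ne fun habs => hu ?_⟩
  rw [← hcoe]
  rcases (abs_eq (by norm_num)).1 habs with h | h
  · rw [h]
  · rw [h, AddCircle.coe_neg, AddCircle.neg_coe_one_half]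

theorem AddCircle.coe_one_half_ne_zero : ((1 / 2 : ℝ) : AddCircle (1 : ℝ)) ≠ 0 := fun h => by
  have := congrArg norm h
  rw [norm_zero, AddCircle.norm_coe_one_eq_abs (by norm_num)] at this
  norm_num at this

noncomputable def shiftProfile (u : AddCircle (1 : ℝ)) (r t : ℝ) : ℝ :=
  √(‖(t : AddCircle (1 : ℝ)) - u‖ ^ 2 + r ^ 2)

theorem shiftProfile_neg (u : AddCircle (1 : ℝ)) (r t : ℝ) :
    shiftProfile u r (-t) = shiftProfile (-u) r t := by
  rw [shiftProfile, shiftProfile, AddCircle.coe_neg, ← norm_neg, neg_sub, sub_neg_eq_add,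
    sub_neg_eq_add, add_comm u]

theorem tendsto_shiftProfile_zero_zero :
    Tendsto (fun s => (shiftProfile 0 0 s - 2 * shiftProfile 0 0 0 + shiftProfile 0 0 (-s)) / s)
      (𝓝[>] 0) (𝓝 2) := by
  have hprofile : ∀ t : ℝ, |t| ≤ 1 / 2 → shiftProfile 0 0 t = |t| := fun t ht => by
    simp [shiftProfile, AddCircle.norm_coe_one_eq_abs ht, Real.sqrt_sq_eq_abs]
  refine tendsto_const_nhds.congr' ?_
  filter_upwards [Ioo_mem_nhdsGT (by norm_num : (0 : ℝ) < 1 / 2)] with s ⟨hs0, hs⟩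
  rw [hprofile s (by rw [abs_of_pos hs0]; linarith), hprofile 0 (by norm_num),
    hprofile (-s) (by rw [abs_neg, abs_of_pos hs0]; linarith), abs_neg, abs_of_pos hs0]
  field_simp
  ring

theorem tendsto_shiftProfile_half (r : ℝ) :
    Tendsto (fun s => (shiftProfile (1 / 2 : ℝ) r s - 2 * shiftProfile (1 / 2 : ℝ) r 0 +
        shiftProfile (1 / 2 : ℝ) r (-s)) / s)
      (𝓝[>] 0) (𝓝 (-(1 / 4 + r ^ 2) ^ (-(1 / 2) : ℝ))) := by
  have hprofile : ∀ t ∈ Icc (0 : ℝ) 1,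
      shiftProfile (1 / 2 : ℝ) r t = √((t - 1 / 2) ^ 2 + r ^ 2) := fun t ht => by
    rw [shiftProfile, ← AddCircle.coe_sub, AddCircle.norm_coe_one_eq_abs
      (abs_le.2 ⟨by linarith [ht.1], by linarith [ht.2]⟩), sq_abs]
  have hg := (hasDerivAt_sqrt_sub_sq_add (a := 1 / 2) (c := r ^ 2) (t := 0)
    (by positivity)).tendsto_slope_zero_right.const_mul 2
  convert hg.congr' ?_ using 2
  · rw [Real.rpow_neg (by positivity), ← Real.sqrt_eq_rpow]
    norm_num
    field_simp
  · filter_upwards [Ioo_mem_nhdsGT (by norm_num : (0 : ℝ) < 1)] with s ⟨hs0, hs⟩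
    rw [shiftProfile_neg, AddCircle.neg_coe_one_half, hprofile s ⟨hs0.le, hs.le⟩,
      hprofile 0 (by norm_num), zero_add, smul_eq_mul]
    field_simp
    ring

theorem tendsto_shiftProfile_of_ne_half {u : AddCircle (1 : ℝ)} {r : ℝ}
    (hu : u ≠ (1 / 2 : ℝ)) (hur : u ≠ 0 ∨ r ≠ 0) :
    Tendsto (fun s => (shiftProfile u r s - 2 * shiftProfile u r 0 + shiftProfile u r (-s)) / s)
      (𝓝[>] 0) (𝓝 0) := by
  obtain ⟨a, rfl, ha⟩ := AddCircle.exists_coe_eq_abs_lt_half hu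
  have hne : (0 - a) ^ 2 + r ^ 2 ≠ 0 := by
    rcases hur with hu0 | hr
    · have : a ≠ 0 := by rintro rfl; simp at hu0
      positivity
    · positivity
  have hprofile : shiftProfile a r =ᶠ[𝓝 0] fun t => √((t - a) ^ 2 + r ^ 2) := by
    filter_upwards [Metric.ball_mem_nhds 0 (by linarith : 0 < 1 / 2 - |a|)] with t ht
    rw [Metric.mem_ball, dist_zero_right, Real.norm_eq_abs] at ht
    rw [shiftProfile, ← AddCircle.coe_sub, AddCircle.norm_coe_one_eq_abs
      (by linarith [abs_sub t a]), sq_abs]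
  simpa using ((hasDerivAt_sqrt_sub_sq_add hne).congr_of_eventuallyEq
    hprofile).tendsto_symmetric_second_diff_div

section Torus

variable {n : ℕ}

theorem torusDist_eq_dist_toLp (x y : Torus n) :
    torusDist x y = dist (WithLp.toLp 2 x) (WithLp.toLp 2 y) :=
  (PiLp.dist_eq_of_L2 _ _).symm

theorem torusDist_eq_zero_iff {x y : Torus n} : torusDist x y = 0 ↔ x = y := by
  rw [torusDist_eq_dist_toLp, dist_eq_zero, (WithLp.toLp_injective 2).eq_iff]

theorem continuous_torusDist (x : Torus n) : Continuous (torusDist x) := by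
  unfold torusDist
  fun_prop

theorem continuous_torusDistDrop (j : Fin n) (x : Torus n) : Continuous (torusDistDrop j x) := by
  unfold torusDistDrop
  fun_prop

theorem torusShift_zero (x : Torus n) (j : Fin n) : torusShift x j 0 = x := by
  funext i
  simp [torusShift]

theorem torusDist_torusShift (x y : Torus n) (j : Fin n) (t : ℝ) :
    torusDist (torusShift x j t) y = shiftProfile (y j - x j) (torusDistDrop j x y) t := by
  have hj : dist (torusShift x j t j) (y j) = ‖(t : AddCircle (1 : ℝ)) - (y j - x j)‖ := by
    rw [dist_eq_norm, torusShift, if_pos rfl]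
    abel_nf
  have hi : ∀ i ∈ Finset.univ.erase j, dist (torusShift x j t i) (y i) = dist (x i) (y i) :=
    fun i hi => by rw [torusShift, if_neg (Finset.ne_of_mem_erase hi)]
  rw [torusDist, shiftProfile, torusDistDrop,
    Real.sq_sqrt (Finset.sum_nonneg fun i _ => sq_nonneg (dist (x i) (y i))),
    ← Finset.add_sum_erase _ _ (Finset.mem_univ j), hj,
    Finset.sum_congr rfl fun i hi' => by rw [hi i hi']]

theorem torusDist_eq_shiftProfile_zero (x y : Torus n) (j : Fin n) :
    torusDist x y = shiftProfile (y j - x j) (torusDistDrop j x y) 0 := by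
  rw [← torusDist_torusShift, torusShift_zero]

theorem abs_torusDist_torusShift_sub_le (x y : Torus n) (j : Fin n) (t : ℝ) :
    |torusDist (torusShift x j t) y - torusDist x y| ≤ |t| := by
  have hshift : torusDist (torusShift x j t) x ≤ |t| := by
    simpa [torusDist_torusShift, torusDistDrop, shiftProfile] using
      (QuotientAddGroup.norm_mk_le_norm : ‖(t : AddCircle (1 : ℝ))‖ ≤ ‖t‖)
  simp only [torusDist_eq_dist_toLp] at hshift ⊢
  exact (abs_dist_sub_le _ _ _).trans hshift

theorem eq_iff_sub_eq_zero_and_torusDistDrop_eq_zero {x y : Torus n} (j : Fin n) :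
    y = x ↔ y j - x j = 0 ∧ torusDistDrop j x y = 0 := by
  rw [eq_comm, ← torusDist_eq_zero_iff, torusDist_eq_shiftProfile_zero x y j, shiftProfile,
    Real.sqrt_eq_zero (by positivity), add_eq_zero_iff_of_nonneg (by positivity) (by positivity)]
  simp only [AddCircle.coe_zero, zero_sub, norm_neg, sq_eq_zero_iff, norm_eq_zero]

theorem mem_torusHyperplane_torusShift_half_iff {x y : Torus n} {j : Fin n} :
    y ∈ torusHyperplane (torusShift x j (1 / 2)) j ↔ y j - x j = (1 / 2 : ℝ) := by
  simp [torusHyperplane, torusShift, sub_eq_iff_eq_add']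

noncomputable def torusDistSecondDiffLimit (x : Torus n) (j : Fin n) (y : Torus n) : ℝ :=
  ({x} : Set (Torus n)).indicator (fun _ => 2) y -
    (torusHyperplane (torusShift x j (1 / 2)) j).indicator
      (fun y => (1 / 4 + torusDistDrop j x y ^ 2) ^ (-(1 / 2) : ℝ)) y

theorem tendsto_torusDist_second_diff_div (x y : Torus n) (j : Fin n) :
    Tendsto (fun s : ℝ => (torusDist (torusShift x j s) y - 2 * torusDist x y +
        torusDist (torusShift x j (-s)) y) / s) (𝓝[>] 0)
      (𝓝 (torusDistSecondDiffLimit x j y)) := by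
  simp only [torusDistSecondDiffLimit, torusDist_torusShift,
    torusDist_eq_shiftProfile_zero x y j]
  by_cases hxy : y = x
  · subst hxy
    have hnot : y ∉ torusHyperplane (torusShift y j (1 / 2)) j := by
      rw [mem_torusHyperplane_torusShift_half_iff, sub_self]
      exact AddCircle.coe_one_half_ne_zero.symm
    have hdrop : torusDistDrop j y y = 0 := by simp [torusDistDrop]
    rw [indicator_of_mem (mem_singleton y), indicator_of_notMem hnot, sub_zero, sub_self, hdrop]
    exact tendsto_shiftProfile_zero_zero
  replace hxy : y ∉ ({x} : Set (Torus n)) := hxy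
  by_cases hH : y ∈ torusHyperplane (torusShift x j (1 / 2)) j
  · rw [indicator_of_notMem hxy, indicator_of_mem hH, zero_sub,
      mem_torusHyperplane_torusShift_half_iff.1 hH]
    exact tendsto_shiftProfile_half _
  · rw [indicator_of_notMem hxy, indicator_of_notMem hH, sub_zero]
    rw [mem_singleton_iff, eq_iff_sub_eq_zero_and_torusDistDrop_eq_zero j, not_and_or] at hxy
    exact tendsto_shiftProfile_of_ne_half (mt mem_torusHyperplane_torusShift_half_iff.2 hH) hxy

theorem abs_torusDist_second_diff_div_le (x y : Torus n) (j : Fin n) {s : ℝ}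
    (hs : 0 < s) :
    |(torusDist (torusShift x j s) y - 2 * torusDist x y + torusDist (torusShift x j (-s)) y) / s|
      ≤ 2 := by
  rw [abs_div, abs_of_pos hs, div_le_iff₀ hs]
  have hplus := abs_torusDist_torusShift_sub_le x y j s
  have hminus := abs_torusDist_torusShift_sub_le x y j (-s)
  rw [abs_neg, abs_of_pos hs] at hminus
  rw [abs_of_pos hs] at hplus
  calc _ = |(torusDist (torusShift x j s) y - torusDist x y) +
        (torusDist (torusShift x j (-s)) y - torusDist x y)| := by ring_nf
    _ ≤ |torusDist (torusShift x j s) y - torusDist x y| +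
        |torusDist (torusShift x j (-s)) y - torusDist x y| := abs_add_le _ _
    _ ≤ 2 * s := by linarith

section Integral

variable {μ : Measure (Torus n)} [IsFiniteMeasure μ]

theorem integrable_torusDist (z : Torus n) : Integrable (torusDist z) μ :=
  (continuous_torusDist z).integrable_of_hasCompactSupport (.of_compactSpace _)

theorem torusPotential_one_second_diff_div (x : Torus n) (j : Fin n) (s : ℝ) :
    (torusPotential 1 μ (torusShift x j s) - 2 * torusPotential 1 μ x +
        torusPotential 1 μ (torusShift x j (-s))) / s =
      ∫ y, (torusDist (torusShift x j s) y - 2 * torusDist x y +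
        torusDist (torusShift x j (-s)) y) / s ∂μ := by
  simp only [torusPotential, Real.rpow_one]
  rw [integral_div, integral_add, integral_sub, integral_const_mul]
  · exact integrable_torusDist _
  · exact (integrable_torusDist x).const_mul 2
  · exact (integrable_torusDist _).sub ((integrable_torusDist x).const_mul 2)
  · exact integrable_torusDist _

theorem tendsto_integral_torusDist_second_diff_div (x : Torus n) (j : Fin n) :
    Tendsto (fun s : ℝ => ∫ y, (torusDist (torusShift x j s) y - 2 * torusDist x y +
        torusDist (torusShift x j (-s)) y) / s ∂μ) (𝓝[>] 0)
      (𝓝 (∫ y, torusDistSecondDiffLimit x j y ∂μ)) := by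
  refine tendsto_integral_filter_of_dominated_convergence (fun _ => 2) ?_ ?_
    (integrable_const 2) (ae_of_all _ (tendsto_torusDist_second_diff_div x · j))
  · exact .of_forall fun s => ((((continuous_torusDist _).sub
      ((continuous_torusDist x).const_mul 2)).add (continuous_torusDist _)).div_const
        s).aestronglyMeasurable
  · filter_upwards [self_mem_nhdsWithin] with s hs
    exact ae_of_all _ fun y => abs_torusDist_second_diff_div_le x y j hs

theorem integral_torusDistSecondDiffLimit (x : Torus n) (j : Fin n) :
    ∫ y, torusDistSecondDiffLimit x j y ∂μ =
      2 * (μ {x}).toReal - ∫ y in torusHyperplane (torusShift x j (1 / 2)) j,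
        (1 / 4 + torusDistDrop j x y ^ 2) ^ (-(1 / 2) : ℝ) ∂μ := by
  have hφ : Integrable (fun y => (1 / 4 + torusDistDrop j x y ^ 2) ^ (-(1 / 2) : ℝ)) μ := by
    refine Continuous.integrable_of_hasCompactSupport ?_ (.of_compactSpace _)
    exact ((continuous_torusDistDrop j x).pow 2).const_add (1 / 4) |>.rpow_const fun y =>
      .inl (add_pos_of_pos_of_nonneg (by norm_num) (sq_nonneg _)).ne'
  have hH : MeasurableSet (torusHyperplane (torusShift x j (1 / 2)) j) :=
    measurable_pi_apply j (measurableSet_singleton _)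
  unfold torusDistSecondDiffLimit
  rw [integral_sub ((integrable_const 2).indicator (measurableSet_singleton x))
    (hφ.indicator hH), integral_indicator hH,
    integral_indicator_const _ (measurableSet_singleton x), smul_eq_mul, mul_comm]
  rfl

end Integral

end Torus

theorem torus_potential_second_difference_one_general {n : ℕ}
    (x : Torus n) (j : Fin n) (μ : Measure (Torus n)) (hμ : IsProbabilityMeasure μ) :
    Tendsto (fun s : ℝ =>
        (torusPotential 1 μ (torusShift x j s) - 2 * torusPotential 1 μ x +
          torusPotential 1 μ (torusShift x j (-s))) / s)
      (nhdsWithin 0 (Set.Ioi 0))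
      (nhds (2 * (μ {x}).toReal -
        ∫ y in torusHyperplane (torusShift x j (1 / 2)) j,
          (1 / 4 + torusDistDrop j x y ^ 2) ^ (-(1 / 2) : ℝ) ∂μ)) := by
  simp_rw [torusPotential_one_second_diff_div, ← integral_torusDistSecondDiffLimit]
  exact tendsto_integral_torusDist_second_diff_div x j

/-- Second-difference formula for the Wasserstein potential on the torus, case `p = 1`. -/
theorem torus_potential_second_difference_one {n : ℕ} (hn : 2 ≤ n)
    (x : Torus n) (j : Fin n) (μ : Measure (Torus n)) (hμ : IsProbabilityMeasure μ) :
    Tendsto (fun s : ℝ =>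
        (torusPotential 1 μ (torusShift x j s) - 2 * torusPotential 1 μ x +
          torusPotential 1 μ (torusShift x j (-s))) / s)
      (nhdsWithin 0 (Set.Ioi 0))
      (nhds (2 * (μ {x}).toReal -
        ∫ y in torusHyperplane (torusShift x j (1 / 2)) j,
          (1 / 4 + torusDistDrop j x y ^ 2) ^ (-(1 / 2) : ℝ) ∂μ)) :=
  torus_potential_second_difference_one_general x j μ hμ
end

section
/- Every isometry ψ of the flat torus T^n (with metric ϱ(x,y) = (Σ_k |(x_k−y_k) mod 1|^2)^{1/2}) has the form ψ(x_1,...,x_n) = (ε_1 x_{σ(1)}, ..., ε_n x_{σ(n)}) + (u_1,...,u_n) for some permutation σ of {1,...,n}, signs ε_1,...,ε_n ∈ {−1,1}, and a point u ∈ T^n. -/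
open MeasureTheory Filter

/-!
Let `π : ℝⁿ → 𝕋ⁿ` be the projection. Near any point `x`, the map `y ↦ ψ (x + π y) - ψ x` lifts to a
map of the Euclidean ball of radius `1/8` preserving distances, hence agreeing with a linear
isometry `A` there. Linear isometries that agree modulo `ℤⁿ` on a small ball coincide, so this
linear part is locally constant, hence constant since `ℝⁿ` is connected, and then
`ψ (π w) = ψ 0 + π (A w)` for all `w`. Thus `A` maps `ℤⁿ` into `ℤⁿ`: its matrix is orthogonal with
integer entries, i.e. a signed permutation matrix.
-/

open Metric
open scoped RealInnerProductSpace

theorem AddCircle.exists_coe_eq_abs_eq_norm (p : ℝ) (z : AddCircle p) :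
    ∃ r : ℝ, (r : AddCircle p) = z ∧ |r| = ‖z‖ := by
  induction z using QuotientAddGroup.induction_on with
  | H x =>
    refine ⟨x - round (p⁻¹ * x) * p, ?_, (AddCircle.norm_eq p).symm⟩
    rw [AddCircle.coe_sub, ← zsmul_eq_mul, AddCircle.coe_zsmul, AddCircle.coe_period, smul_zero,
      sub_zero]

theorem apply_eq_apply_of_forall_norm_lt {E α : Type*} [NormedAddCommGroup E] [NormedSpace ℝ E]
    {f : E → α} {r : ℝ} (hr : 0 < r) (hf : ∀ w z, ‖z‖ < r → f (w + z) = f w) (v w : E) :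
    f v = f w := by
  refine IsLocallyConstant.apply_eq_of_preconnectedSpace ?_ v w
  refine (IsLocallyConstant.iff_exists_open f).2 fun x => ⟨ball x r, isOpen_ball, mem_ball_self hr,
    fun y hy => ?_⟩
  rw [mem_ball, dist_eq_norm] at hy
  simpa using hf x (y - x) hy

theorem LinearMapClass.eq_of_eqOn_closedBall {E G F : Type*} [NormedAddCommGroup E]
    [NormedSpace ℝ E] [AddCommGroup G] [Module ℝ G] [FunLike F E G] [LinearMapClass F ℝ E G]
    {f g : F} {r : ℝ}
    (hr : 0 < r) (h : Set.EqOn f g (closedBall 0 r)) : f = g := by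
  refine DFunLike.ext _ _ fun v => ?_
  rcases eq_or_ne v 0 with rfl | hv
  · simp
  have hc : r / ‖v‖ ≠ 0 := div_ne_zero hr.ne' (norm_ne_zero_iff.2 hv)
  have hmem : (r / ‖v‖) • v ∈ closedBall 0 r := by
    rw [mem_closedBall_zero_iff, norm_smul, Real.norm_of_nonneg (by positivity),
      div_mul_cancel₀ _ (norm_ne_zero_iff.2 hv)]
  simpa [hc] using h hmem

theorem exists_linearIsometryEquiv_eqOn_closedBall {E : Type*} [NormedAddCommGroup E]
    [InnerProductSpace ℝ E] [FiniteDimensional ℝ E] {g : E → E} {r : ℝ} (hr : 0 < r)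
    (hg0 : g 0 = 0)
    (hg : ∀ y ∈ closedBall (0 : E) r, ∀ y' ∈ closedBall (0 : E) r, ‖g y - g y'‖ = ‖y - y'‖) :
    ∃ A : E ≃ₗᵢ[ℝ] E, Set.EqOn g A (closedBall 0 r) := by
  have hinner : ∀ y ∈ closedBall (0 : E) r, ∀ y' ∈ closedBall (0 : E) r,
      ⟪g y, g y'⟫ = ⟪y, y'⟫ := by
    have hnorm : ∀ y ∈ closedBall (0 : E) r, ‖g y‖ = ‖y‖ := fun y hy => by
      simpa [hg0] using hg y hy 0 (mem_closedBall_self hr.le)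
    intro y hy y' hy'
    rw [real_inner_eq_norm_mul_self_add_norm_mul_self_sub_norm_sub_mul_self_div_two,
      real_inner_eq_norm_mul_self_add_norm_mul_self_sub_norm_sub_mul_self_div_two,
      hnorm y hy, hnorm y' hy', hg y hy y' hy']
  let e := stdOrthonormalBasis ℝ E
  have he : ∀ k, r • e k ∈ closedBall (0 : E) r := fun k => by
    simp [norm_smul, abs_of_pos hr]
  let b k := r⁻¹ • g (r • e k)
  have hb : ∀ k, ∀ y ∈ closedBall (0 : E) r, ⟪b k, g y⟫ = ⟪e k, y⟫ := fun k y hy => by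
    rw [real_inner_smul_left, hinner _ (he k) y hy, real_inner_smul_left,
      inv_mul_cancel_left₀ hr.ne']
  have hb_on : Orthonormal ℝ b := by
    refine orthonormal_iff_ite.2 fun k l => ?_
    rw [← orthonormal_iff_ite.1 e.orthonormal, real_inner_smul_right, hb k _ (he l),
      real_inner_smul_right, inv_mul_cancel_left₀ hr.ne']
  let b' : OrthonormalBasis _ ℝ E := .mk hb_on
    (hb_on.linearIndependent.span_eq_top_of_card_eq_finrank' (by simp)).ge
  -- `A : e k ↦ b k`; both `g y` and `A y` have coordinates `⟪e k, y⟫` in the basis `b`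
  refine ⟨e.equiv b' (Equiv.refl _), fun y hy => b'.repr.injective ?_⟩
  ext k
  have hAe : e.equiv b' (Equiv.refl _) (e k) = b k := by simp [b']
  rw [b'.repr_apply_apply, b'.repr_apply_apply, OrthonormalBasis.coe_mk, hb k y hy, ← hAe,
    LinearIsometryEquiv.inner_map_map]

section SignedPermutation

variable {ι : Type*} [Fintype ι] [DecidableEq ι]

theorem Int.exists_eq_pi_single_of_sum_sq_eq_one {k : ι → ℤ}
    (hk : ∑ j, k j ^ 2 = 1) : ∃ i, (k i = 1 ∨ k i = -1) ∧ k = Pi.single i (k i) := by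
  obtain ⟨i, hi⟩ : ∃ i, k i ≠ 0 := by
    by_contra! h
    simp [h] at hk
  have hsplit := Finset.add_sum_erase Finset.univ (fun j => k j ^ 2) (Finset.mem_univ i)
  have hrest : ∑ j ∈ Finset.univ.erase i, k j ^ 2 = 0 := by
    have : 0 < k i ^ 2 := by positivity
    have : 0 ≤ ∑ j ∈ Finset.univ.erase i, k j ^ 2 := by positivity
    omega
  refine ⟨i, ?_, funext fun j => ?_⟩
  · exact sq_eq_one_iff.1 (by omega)
  · rcases eq_or_ne j i with rfl | hj
    · simp
    · rw [Pi.single_eq_of_ne hj]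
      exact pow_eq_zero_iff two_ne_zero |>.1 <| (Finset.sum_eq_zero_iff_of_nonneg
        (fun j _ => sq_nonneg (k j))).1 hrest j (Finset.mem_erase.2 ⟨hj, Finset.mem_univ j⟩)

theorem EuclideanSpace.exists_eq_single_of_norm_eq_one_of_int {v : EuclideanSpace ℝ ι}
    (hv : ‖v‖ = 1) (hint : ∀ j, ∃ k : ℤ, v j = k) :
    ∃ i, ∃ s : ℤ, (s = 1 ∨ s = -1) ∧ v = EuclideanSpace.single i (s : ℝ) := by
  choose k hk using hint
  have hsum : ∑ j, k j ^ 2 = 1 := by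
    have := EuclideanSpace.real_norm_sq_eq v
    rw [hv] at this
    exact_mod_cast (by simpa [hk] using this.symm : ∑ j, (k j : ℝ) ^ 2 = 1)
  obtain ⟨i, hi, hki⟩ := Int.exists_eq_pi_single_of_sum_sq_eq_one hsum
  refine ⟨i, k i, hi, ?_⟩
  ext j
  rw [hk j, congrFun hki j, PiLp.single_apply]
  rcases eq_or_ne j i with rfl | hj
  · simp
  · simp [hj]

theorem LinearIsometryEquiv.exists_signedPerm_of_apply_single_int
    (A : EuclideanSpace ℝ ι ≃ₗᵢ[ℝ] EuclideanSpace ℝ ι)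
    (hA : ∀ i j, ∃ k : ℤ, A (EuclideanSpace.single j 1) i = k) :
    ∃ (σ : Equiv.Perm ι) (ε : ι → ℤ), (∀ i, ε i = 1 ∨ ε i = -1) ∧
      ∀ w i, A w i = ε i * w (σ i) := by
  -- the `i`-th row of the matrix of `A` is `A.symm (single i 1)`
  have hrow : ∀ i, ∃ j, ∃ s : ℤ, (s = 1 ∨ s = -1) ∧
      A.symm (EuclideanSpace.single i 1) = EuclideanSpace.single j (s : ℝ) := fun i => by
    refine EuclideanSpace.exists_eq_single_of_norm_eq_one_of_int (by simp) fun j => ?_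
    have := A.inner_map_eq_flip (EuclideanSpace.single j 1) (EuclideanSpace.single i 1)
    rw [EuclideanSpace.inner_single_right, EuclideanSpace.inner_single_left] at this
    simp only [one_mul, map_one, conj_trivial] at this
    simpa [← this] using hA i j
  choose τ ε hε hτ using hrow
  have hA_apply : ∀ w i, A w i = ε i * w (τ i) := fun w i => by
    have := A.inner_map_eq_flip w (EuclideanSpace.single i 1)
    rw [hτ, EuclideanSpace.inner_single_right, EuclideanSpace.inner_single_right] at this
    simpa using this
  have hτ_inj : Function.Injective τ := fun i i' h => by
    by_contra hne
    have := A.symm.inner_map_map (EuclideanSpace.single i 1) (EuclideanSpace.single i' 1)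
    rw [hτ, hτ, h] at this
    rcases hε i with h₁ | h₁ <;> rcases hε i' with h₂ | h₂ <;>
      simp [EuclideanSpace.inner_single_left, h₁, h₂, hne] at this
  exact ⟨Equiv.ofBijective τ (Finite.injective_iff_bijective.1 hτ_inj), ε, hε, hA_apply⟩

end SignedPermutation

namespace Torus

variable {n : ℕ}

def proj (n : ℕ) : EuclideanSpace ℝ (Fin n) →+ Torus n where
  toFun y i := (y i : AddCircle (1 : ℝ))
  map_zero' := by ext; simp
  map_add' y y' := by ext; simp

@[simp]
theorem proj_apply (y : EuclideanSpace ℝ (Fin n)) (i : Fin n) : proj n y i = y i := rfl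

theorem proj_eq_zero_iff {y : EuclideanSpace ℝ (Fin n)} :
    proj n y = 0 ↔ ∀ i, ∃ k : ℤ, y i = k := by
  simp only [funext_iff, proj_apply, Pi.zero_apply, AddCircle.coe_eq_zero_iff, zsmul_one]
  simp_rw [eq_comm]

noncomputable def lift (x : Torus n) : EuclideanSpace ℝ (Fin n) :=
  WithLp.toLp 2 fun i => (AddCircle.exists_coe_eq_abs_eq_norm 1 (x i)).choose

@[simp]
theorem proj_lift (x : Torus n) : proj n (lift x) = x :=
  funext fun i => (AddCircle.exists_coe_eq_abs_eq_norm 1 (x i)).choose_spec.1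

theorem norm_lift (x : Torus n) : ‖lift x‖ = torusDist x 0 := by
  simp only [EuclideanSpace.norm_eq, torusDist, Pi.zero_apply, dist_zero_right, Real.norm_eq_abs]
  congr! 3 with i
  exact (AddCircle.exists_coe_eq_abs_eq_norm 1 (x i)).choose_spec.2

theorem torusDist_add_left (z x y : Torus n) : torusDist (z + x) (z + y) = torusDist x y := by
  simp [torusDist]

theorem torusDist_sub_right (x y z : Torus n) : torusDist (x - z) (y - z) = torusDist x y := by
  simp [torusDist]

theorem torusDist_proj_of_norm_sub_le {a b : EuclideanSpace ℝ (Fin n)} (h : ‖a - b‖ ≤ 1 / 2) :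
    torusDist (proj n a) (proj n b) = ‖a - b‖ := by
  rw [torusDist, EuclideanSpace.norm_eq]
  congr! 2 with i
  have hi : |a i - b i| ≤ |(1 : ℝ)| / 2 := by
    simpa using (PiLp.norm_apply_le (a - b) i).trans h
  rw [proj_apply, proj_apply, dist_eq_norm, ← AddCircle.coe_sub,
    (AddCircle.norm_coe_eq_abs_iff 1 one_ne_zero).2 hi, Real.norm_eq_abs, PiLp.sub_apply]

theorem injOn_proj : Set.InjOn (proj n) (closedBall 0 (1 / 4)) := fun a ha b hb hab => by
  have hab' : ‖a - b‖ ≤ 1 / 2 := by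
    rw [mem_closedBall_zero_iff] at ha hb
    linarith [norm_sub_le a b]
  have := torusDist_proj_of_norm_sub_le hab'
  rw [hab] at this
  simpa [torusDist, eq_comm (a := (0 : ℝ)), sub_eq_zero] using this

def HasLocalLinearPart (ψ : Torus n → Torus n) (x : Torus n)
    (A : EuclideanSpace ℝ (Fin n) ≃ₗᵢ[ℝ] EuclideanSpace ℝ (Fin n)) (r : ℝ) : Prop :=
  ∀ y ∈ closedBall 0 r, ψ (x + proj n y) = ψ x + proj n (A y)

variable {ψ : Torus n → Torus n} {x : Torus n}
  {A A' : EuclideanSpace ℝ (Fin n) ≃ₗᵢ[ℝ] EuclideanSpace ℝ (Fin n)} {r s : ℝ}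

theorem HasLocalLinearPart.mono (h : HasLocalLinearPart ψ x A r) (hsr : s ≤ r) :
    HasLocalLinearPart ψ x A s :=
  fun y hy => h y (closedBall_subset_closedBall hsr hy)

theorem HasLocalLinearPart.add_proj (h : HasLocalLinearPart ψ x A r)
    {z : EuclideanSpace ℝ (Fin n)} (hz : ‖z‖ ≤ s) :
    HasLocalLinearPart ψ (x + proj n z) A (r - s) := fun y hy => by
  rw [mem_closedBall_zero_iff] at hy
  have hzy : z + y ∈ closedBall 0 r := by
    rw [mem_closedBall_zero_iff]
    linarith [norm_add_le z y]
  have hz' : z ∈ closedBall 0 r := by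
    rw [mem_closedBall_zero_iff]
    linarith [norm_nonneg y]
  rw [add_assoc, ← map_add, h _ hzy, h _ hz', map_add, map_add, add_assoc]

theorem HasLocalLinearPart.unique (h : HasLocalLinearPart ψ x A r)
    (h' : HasLocalLinearPart ψ x A' r) (hr : 0 < r) (hr' : r ≤ 1 / 4) : A = A' := by
  refine LinearMapClass.eq_of_eqOn_closedBall hr fun y hy => injOn_proj ?_ ?_ ?_
  · simpa using closedBall_subset_closedBall hr' hy
  · simpa using closedBall_subset_closedBall hr' hy
  · exact add_left_cancel ((h y hy).symm.trans (h' y hy))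

variable (hψ : ∀ x y, torusDist (ψ x) (ψ y) = torusDist x y)
include hψ

theorem exists_hasLocalLinearPart (x : Torus n) : ∃ A, HasLocalLinearPart ψ x A (1 / 8) := by
  set Δ : EuclideanSpace ℝ (Fin n) → Torus n := fun y => ψ (x + proj n y) - ψ x
  have hΔ : ∀ y y', torusDist (Δ y) (Δ y') = torusDist (proj n y) (proj n y') := fun y y' => by
    simp only [Δ, torusDist_sub_right, hψ, torusDist_add_left]
  have hΔ0 : Δ 0 = 0 := by simp [Δ]
  have hsub : ∀ y ∈ closedBall (0 : EuclideanSpace ℝ (Fin n)) (1 / 8),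
      ∀ y' ∈ closedBall (0 : EuclideanSpace ℝ (Fin n)) (1 / 8), ‖y - y'‖ ≤ 1 / 4 :=
    fun y hy y' hy' => by
      rw [mem_closedBall_zero_iff] at hy hy'
      linarith [norm_sub_le y y']
  have hnorm : ∀ y ∈ closedBall 0 (1 / 8), ‖lift (Δ y)‖ = ‖y‖ := fun y hy => by
    rw [norm_lift, ← hΔ0, hΔ,
      torusDist_proj_of_norm_sub_le ((hsub y hy 0 (by simp)).trans (by norm_num)), sub_zero]
  obtain ⟨A, hA⟩ := exists_linearIsometryEquiv_eqOn_closedBall (g := fun y => lift (Δ y))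
    (r := 1 / 8) (by norm_num) (by simpa using hnorm 0 (by simp)) fun y hy y' hy' => by
      have hlift : ‖lift (Δ y) - lift (Δ y')‖ ≤ 1 / 2 := by
        linarith [norm_sub_le (lift (Δ y)) (lift (Δ y')), hnorm y hy, hnorm y' hy',
          mem_closedBall_zero_iff.1 hy, mem_closedBall_zero_iff.1 hy']
      rw [← torusDist_proj_of_norm_sub_le hlift, proj_lift, proj_lift, hΔ,
        torusDist_proj_of_norm_sub_le ((hsub y hy y' hy').trans (by norm_num))]
  refine ⟨A, fun y hy => ?_⟩
  rw [← hA hy, proj_lift, add_sub_cancel]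

theorem exists_forall_hasLocalLinearPart : ∃ A, ∀ x, HasLocalLinearPart ψ x A (1 / 8) := by
  choose L hL using exists_hasLocalLinearPart hψ
  have hL_const : ∀ w z, ‖z‖ < 1 / 16 → L (proj n (w + z)) = L (proj n w) := fun w z hz => by
    rw [map_add]
    exact ((hL _).mono (s := 1 / 16) (by norm_num)).unique
      (((hL _).add_proj hz.le).mono (by norm_num)) (by norm_num) (by norm_num)
  refine ⟨L 0, fun x => ?_⟩
  have hLx : L x = L 0 := by
    simpa using apply_eq_apply_of_forall_norm_lt (f := fun w => L (proj n w)) (by norm_num)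
      hL_const (lift x) 0
  exact hLx ▸ hL x

theorem exists_forall_proj_eq : ∃ A : EuclideanSpace ℝ (Fin n) ≃ₗᵢ[ℝ] EuclideanSpace ℝ (Fin n),
    ∀ w, ψ (proj n w) = ψ 0 + proj n (A w) := by
  obtain ⟨A, hA⟩ := exists_forall_hasLocalLinearPart hψ
  refine ⟨A, fun w => ?_⟩
  have := apply_eq_apply_of_forall_norm_lt (f := fun w => ψ (proj n w) - proj n (A w))
    (r := 1 / 8) (by norm_num) (fun w z hz => by
      simp only [map_add, hA _ z (mem_closedBall_zero_iff.2 hz.le)]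
      abel) w 0
  simpa [sub_eq_iff_eq_add, add_comm] using this

end Torus

theorem torus_isometry_form_general {n : ℕ} (ψ : Torus n → Torus n)
    (hdist : ∀ x y : Torus n, torusDist (ψ x) (ψ y) = torusDist x y) :
    ∃ (σ : Equiv.Perm (Fin n)) (ε : Fin n → ℤ) (u : Torus n),
      (∀ i, ε i = 1 ∨ ε i = -1) ∧
      ∀ (x : Torus n) (i : Fin n), ψ x i = ε i • x (σ i) + u i := by
  obtain ⟨A, hA⟩ := Torus.exists_forall_proj_eq hdist
  have hA_int : ∀ i j, ∃ k : ℤ, A (EuclideanSpace.single j 1) i = k := fun i j => by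
    have hsingle : Torus.proj n (EuclideanSpace.single j 1) = 0 :=
      Torus.proj_eq_zero_iff.2 fun l => by
        rcases eq_or_ne l j with rfl | hl
        · exact ⟨1, by simp⟩
        · exact ⟨0, by simp [hl]⟩
    have := hA (EuclideanSpace.single j 1)
    rw [hsingle, left_eq_add] at this
    exact Torus.proj_eq_zero_iff.1 this i
  obtain ⟨σ, ε, hε, hAσ⟩ := A.exists_signedPerm_of_apply_single_int hA_int
  refine ⟨σ, ε, ψ 0, hε, fun x i => ?_⟩
  rw [← Torus.proj_lift x, hA, Pi.add_apply, Torus.proj_apply, hAσ, ← zsmul_eq_mul,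
    AddCircle.coe_zsmul, Torus.proj_apply, add_comm]

/-- Every isometry of the flat torus `𝕋ⁿ` is of the form
`ψ(x)_i = ε_i x_{σ(i)} + u_i` for a permutation `σ`, signs `ε_i ∈ {−1,1}`
and a translation vector `u`. -/
theorem torus_isometry_form {n : ℕ} (ψ : Torus n → Torus n)
    (hbij : Function.Bijective ψ)
    (hdist : ∀ x y : Torus n, torusDist (ψ x) (ψ y) = torusDist x y) :
    ∃ (σ : Equiv.Perm (Fin n)) (ε : Fin n → ℤ) (u : Torus n),
      (∀ i, ε i = 1 ∨ ε i = -1) ∧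
      ∀ (x : Torus n) (i : Fin n), ψ x i = ε i • x (σ i) + u i :=
  torus_isometry_form_general ψ hdist
end

section
/- Let X be a complete separable metric space and p ≥ 1. For points x ≠ y in X, a probability measure η on X, and α ∈ [0,1], the measure α δ_x + (1−α) δ_y minimizes the p-Wasserstein distance from η among all measures of the form a δ_x + (1−a) δ_y with a ∈ [0,1] if and only if η({z : r(x,z) < r(y,z)}) ≤ α ≤ η({z : r(x,z) ≤ r(y,z)}). -/
/-!
Every coupling of `η` with `a δ_x + (1 - a) δ_y` moves each point `z` to `x` or to `y`, so its
cost is at least `L = ∫ min (r(x,z)^p, r(y,z)^p) dη`, the cost of moving every point to the nearer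
of the two. Sending `{r(x,·) < r(y,·)}` to `x` and the rest to `y` attains `L` with
`a = η {r(x,·) < r(y,·)}`, doing the same with `{r(x,·) ≤ r(y,·)}` attains it with
`a = η {r(x,·) ≤ r(y,·)}`, and convex combinations of these two couplings attain it for every `a`
in between. For `a` below that interval, some mass `δ > 0` of points at which `x` is cheaper
by at least some `ε > 0` must go to `y` under every coupling, so the optimal cost is at least
`L + ε δ > L`; the case above the interval is symmetric.
-/

open MeasureTheory Filter

/-- The measure `a δ_x + (1-a) δ_y`. -/
noncomputable def twoPointMeasure {X : Type*} [MeasurableSpace X] (x y : X) (a : ℝ) :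
    Measure X :=
  ENNReal.ofReal a • Measure.dirac x + ENNReal.ofReal (1 - a) • Measure.dirac y

open Set
open scoped ENNReal

lemma exists_pos_lt_measure_setOf_add_le {α : Type*} [MeasurableSpace α] (μ : Measure α)
    {f g : α → ℝ} {c : ℝ≥0∞} (h : c < μ {z | f z < g z}) :
    ∃ ε > 0, c < μ {z | f z + ε ≤ g z} := by
  have hU : {z | f z < g z} = ⋃ n : ℕ, {z | f z + 1 / ((n : ℝ) + 1) ≤ g z} := by
    ext z
    simp only [mem_ofPred_eq, mem_iUnion]
    constructor
    · intro hz
      obtain ⟨n, hn⟩ := exists_nat_one_div_lt (sub_pos.2 hz)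
      exact ⟨n, by linarith⟩
    · rintro ⟨n, hn⟩
      have : (0 : ℝ) < 1 / ((n : ℝ) + 1) := by positivity
      linarith
  have hmono : Monotone fun n : ℕ => {z | f z + 1 / ((n : ℝ) + 1) ≤ g z} := by
    intro i j hij z hz
    have : 1 / ((j : ℝ) + 1) ≤ 1 / ((i : ℝ) + 1) := by gcongr
    exact le_trans (by linarith) (show f z + 1 / ((i : ℝ) + 1) ≤ g z from hz)
  rw [hU, hmono.measure_iUnion, lt_iSup_iff] at h
  obtain ⟨n, hn⟩ := h
  exact ⟨_, by positivity, hn⟩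

section TwoPoint

variable {X : Type*} [MeasurableSpace X] {x y : X} {a : ℝ}

lemma twoPointMeasure_comm (x y : X) (a : ℝ) :
    twoPointMeasure x y a = twoPointMeasure y x (1 - a) := by
  rw [twoPointMeasure, twoPointMeasure, sub_sub_cancel, add_comm]

lemma isProbabilityMeasure_twoPointMeasure (x y : X) (ha : a ∈ Icc (0 : ℝ) 1) :
    IsProbabilityMeasure (twoPointMeasure x y a) := by
  constructor
  simp only [twoPointMeasure, Measure.add_apply, Measure.smul_apply, measure_univ, smul_eq_mul,
    mul_one]
  rw [← ENNReal.ofReal_add ha.1 (sub_nonneg.2 ha.2), add_sub_cancel, ENNReal.ofReal_one]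

lemma smul_twoPointMeasure_add_smul {s t b : ℝ} (hs : 0 ≤ s) (ht : 0 ≤ t) (hst : s + t = 1)
    (ha : a ∈ Icc (0 : ℝ) 1) (hb : b ∈ Icc (0 : ℝ) 1) :
    ENNReal.ofReal s • twoPointMeasure x y a + ENNReal.ofReal t • twoPointMeasure x y b =
      twoPointMeasure x y (s * a + t * b) := by
  have ha' := sub_nonneg.2 ha.2
  have hb' := sub_nonneg.2 hb.2
  simp only [twoPointMeasure, smul_add, smul_smul, ← ENNReal.ofReal_mul hs,
    ← ENNReal.ofReal_mul ht]
  rw [add_add_add_comm, ← add_smul, ← add_smul,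
    ← ENNReal.ofReal_add (mul_nonneg hs ha.1) (mul_nonneg ht hb.1),
    ← ENNReal.ofReal_add (mul_nonneg hs ha') (mul_nonneg ht hb')]
  congr 3
  linear_combination hst

lemma ae_eq_or_eq_twoPointMeasure [MeasurableSingletonClass X] :
    ∀ᵐ w ∂twoPointMeasure x y a, w = x ∨ w = y := by
  refine ae_add_measure_iff.2 ⟨Measure.ae_smul_measure ?_ _, Measure.ae_smul_measure ?_ _⟩ <;>
    simp [ae_dirac_eq]

lemma twoPointMeasure_compl_singleton_le [MeasurableSingletonClass X] :
    twoPointMeasure x y a {y}ᶜ ≤ ENNReal.ofReal a := by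
  simpa [twoPointMeasure] using
    mul_le_of_le_one_right' (prob_le_one (μ := Measure.dirac x) (s := {y}ᶜ))

end TwoPoint

section Coupling

variable {X : Type*} [MeasurableSpace X]

structure IsCoupling (π : Measure (X × X)) (μ ν : Measure X) : Prop where
  isProbabilityMeasure : IsProbabilityMeasure π
  map_fst : π.map Prod.fst = μ
  map_snd : π.map Prod.snd = ν

variable {π π' : Measure (X × X)} {μ ν ν' : Measure X} {x y : X}

lemma IsCoupling.of_map [IsProbabilityMeasure μ] (h₁ : π.map Prod.fst = μ)
    (h₂ : π.map Prod.snd = ν) : IsCoupling π μ ν where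
  isProbabilityMeasure := ⟨by
    rw [← preimage_univ (f := Prod.fst), ← Measure.map_apply measurable_fst .univ, h₁,
      measure_univ]⟩
  map_fst := h₁
  map_snd := h₂

lemma isCoupling_prod [IsProbabilityMeasure μ] [IsProbabilityMeasure ν] :
    IsCoupling (μ.prod ν) μ ν :=
  .of_map Measure.fst_prod Measure.snd_prod

lemma IsCoupling.smul_add_smul (h : IsCoupling π μ ν) (h' : IsCoupling π' μ ν') {s t : ℝ}
    (hs : 0 ≤ s) (ht : 0 ≤ t) (hst : s + t = 1) :
    IsCoupling (ENNReal.ofReal s • π + ENNReal.ofReal t • π') μ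
      (ENNReal.ofReal s • ν + ENNReal.ofReal t • ν') := by
  have := h.isProbabilityMeasure
  have : IsProbabilityMeasure μ :=
    h.map_fst ▸ Measure.isProbabilityMeasure_map measurable_fst.aemeasurable
  refine .of_map ?_ ?_
  · rw [Measure.map_add _ _ measurable_fst, Measure.map_smul, Measure.map_smul, h.map_fst,
      h'.map_fst, ← add_smul, ← ENNReal.ofReal_add hs ht, hst, ENNReal.ofReal_one, one_smul]
  · rw [Measure.map_add _ _ measurable_snd, Measure.map_smul, Measure.map_smul, h.map_snd,
      h'.map_snd]

lemma IsCoupling.integrable_comp_fst (h : IsCoupling π μ ν) {f : X → ℝ} (hf : Integrable f μ) :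
    Integrable (fun q => f q.1) π :=
  (h.map_fst ▸ hf).comp_measurable measurable_fst

lemma IsCoupling.integral_comp_fst (h : IsCoupling π μ ν) {f : X → ℝ}
    (hf : AEStronglyMeasurable f μ) : ∫ q, f q.1 ∂π = ∫ z, f z ∂μ := by
  rw [← integral_map measurable_fst.aemeasurable (h.map_fst ▸ hf), h.map_fst]

noncomputable def splitCoupling (μ : Measure X) (x y : X) (B : Set X) : Measure (X × X) :=
  (μ.restrict B).map (·, x) + (μ.restrict Bᶜ).map (·, y)

lemma isCoupling_splitCoupling [IsProbabilityMeasure μ] {B : Set X} (hB : MeasurableSet B) :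
    IsCoupling (splitCoupling μ x y B) μ (twoPointMeasure x y (μ B).toReal) := by
  have hx : Measurable fun z : X => (z, x) := measurable_id.prodMk measurable_const
  have hy : Measurable fun z : X => (z, y) := measurable_id.prodMk measurable_const
  refine .of_map ?_ ?_ <;>
    rw [splitCoupling, Measure.map_add _ _ (by fun_prop), Measure.map_map (by fun_prop) hx,
      Measure.map_map (by fun_prop) hy]
  · simpa [Function.comp_def] using Measure.restrict_add_restrict_compl hB
  · rw [Function.comp_def, Function.comp_def, Measure.map_const, Measure.map_const,
      Measure.restrict_apply_univ, Measure.restrict_apply_univ, twoPointMeasure,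
      ENNReal.ofReal_sub _ ENNReal.toReal_nonneg, ENNReal.ofReal_one,
      ENNReal.ofReal_toReal (measure_ne_top _ _), prob_compl_eq_one_sub hB]

end Coupling

section Metric

variable {X : Type*} [MetricSpace X] {p a : ℝ} {x y : X}

noncomputable def nearerCost (p : ℝ) (x y z : X) : ℝ :=
  min (dist x z ^ p) (dist y z ^ p)

lemma nearerCost_nonneg (p : ℝ) (x y z : X) : 0 ≤ nearerCost p x y z :=
  le_min (by positivity) (by positivity)

lemma nearerCost_comm (p : ℝ) (x y : X) : nearerCost p x y = nearerCost p y x :=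
  funext fun _ => min_comm _ _

variable [MeasurableSpace X]

def couplingCosts (p : ℝ) (μ ν : Measure X) : Set ℝ :=
  {r | ∃ π, IsCoupling π μ ν ∧ r = ∫ q, dist q.1 q.2 ^ p ∂π}

lemma wassersteinDist_eq_sInf_couplingCosts (p : ℝ) (μ ν : Measure X) :
    wassersteinDist dist p μ ν = sInf (couplingCosts p μ ν) ^ (1 / p) :=
  congrArg (sInf · ^ (1 / p)) <| Set.ext fun _ => exists_congr fun _ =>
    ⟨fun ⟨h, h₁, h₂, hr⟩ => ⟨⟨h, h₁, h₂⟩, hr⟩, fun ⟨⟨h, h₁, h₂⟩, hr⟩ => ⟨h, h₁, h₂, hr⟩⟩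

lemma couplingCosts_nonempty {μ ν : Measure X} [IsProbabilityMeasure μ]
    [IsProbabilityMeasure ν] : (couplingCosts p μ ν).Nonempty :=
  ⟨_, _, isCoupling_prod, rfl⟩

variable [BorelSpace X] {η : Measure X} {π : Measure (X × X)}

lemma measurable_dist_rpow (p : ℝ) (x : X) : Measurable fun z => dist x z ^ p :=
  (continuous_const.dist continuous_id).measurable.pow_const p

lemma measurableSet_dist_lt_dist (x y : X) : MeasurableSet {z | dist x z < dist y z} :=
  measurableSet_lt (continuous_const.dist continuous_id).measurable
    (continuous_const.dist continuous_id).measurable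

lemma measurableSet_dist_le_dist (x y : X) : MeasurableSet {z | dist x z ≤ dist y z} :=
  measurableSet_le (continuous_const.dist continuous_id).measurable
    (continuous_const.dist continuous_id).measurable

variable (hmom : ∀ x₀ : X, HasFiniteIntegral (fun z => dist z x₀ ^ p) η)
include hmom

lemma integrable_dist_rpow (x₀ : X) : Integrable (fun z => dist x₀ z ^ p) η :=
  ⟨(measurable_dist_rpow p x₀).aestronglyMeasurable, by simpa only [dist_comm] using hmom x₀⟩

lemma integrable_nearerCost : Integrable (nearerCost p x y) η :=
  (integrable_dist_rpow hmom x).mono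
    ((measurable_dist_rpow p x).min (measurable_dist_rpow p y)).aestronglyMeasurable
    (ae_of_all _ fun z => by
      rw [Real.norm_of_nonneg (nearerCost_nonneg p x y z), Real.norm_of_nonneg (by positivity)]
      exact min_le_left _ _)

section TwoPointCoupling

variable (hπ : IsCoupling π η (twoPointMeasure x y a))
include hπ

omit hmom in
lemma IsCoupling.ae_snd_eq_or_eq : ∀ᵐ q ∂π, q.2 = x ∨ q.2 = y :=
  ae_of_ae_map measurable_snd.aemeasurable (hπ.map_snd ▸ ae_eq_or_eq_twoPointMeasure)

omit hmom in
/-- The cost is continuous, but the product σ-algebra on `X × X` may be smaller than the Borel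
one; `π`-a.e. the cost agrees with a function that is measurable for it. -/
lemma IsCoupling.aemeasurable_cost : AEMeasurable (fun q : X × X => dist q.1 q.2 ^ p) π := by
  classical
  refine ⟨fun q => if q.2 = x then dist x q.1 ^ p else dist y q.1 ^ p,
    Measurable.ite (measurable_snd (measurableSet_singleton x))
      ((measurable_dist_rpow p x).comp measurable_fst)
      ((measurable_dist_rpow p y).comp measurable_fst), ?_⟩
  filter_upwards [hπ.ae_snd_eq_or_eq] with q hq
  rcases hq with hq | hq <;> split_ifs <;> simp_all [dist_comm]

omit hmom in
lemma IsCoupling.nearerCost_le_cost_ae :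
    ∀ᵐ q ∂π, nearerCost p x y q.1 ≤ dist q.1 q.2 ^ p := by
  filter_upwards [hπ.ae_snd_eq_or_eq] with q hq
  rcases hq with hq | hq <;> rw [hq, dist_comm]
  exacts [min_le_left _ _, min_le_right _ _]

lemma IsCoupling.integrable_cost : Integrable (fun q : X × X => dist q.1 q.2 ^ p) π := by
  have hfst x₀ := hπ.integrable_comp_fst (integrable_dist_rpow hmom x₀)
  refine ((hfst x).add (hfst y)).mono' hπ.aemeasurable_cost.aestronglyMeasurable ?_
  filter_upwards [hπ.ae_snd_eq_or_eq] with q hq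
  rw [Real.norm_of_nonneg (by positivity)]
  have := Real.rpow_nonneg (dist_nonneg (x := x) (y := q.1)) p
  have := Real.rpow_nonneg (dist_nonneg (x := y) (y := q.1)) p
  rcases hq with hq | hq <;> simp only [Pi.add_apply, hq, dist_comm q.1] <;> linarith

omit hmom in
lemma IsCoupling.measure_le_measure_prod_singleton_add {s : Set X} (hs : MeasurableSet s) :
    η s ≤ π (s ×ˢ {y}) + ENNReal.ofReal a :=
  calc η s = π (Prod.fst ⁻¹' s) := by rw [← hπ.map_fst, Measure.map_apply measurable_fst hs]
    _ ≤ π (s ×ˢ {y} ∪ Prod.snd ⁻¹' {y}ᶜ) := measure_mono fun q hq => by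
        by_cases h : q.2 = y
        exacts [Or.inl ⟨hq, h⟩, Or.inr h]
    _ ≤ π (s ×ˢ {y}) + π (Prod.snd ⁻¹' {y}ᶜ) := measure_union_le _ _
    _ ≤ π (s ×ˢ {y}) + ENNReal.ofReal a := by
        rw [← Measure.map_apply measurable_snd (measurableSet_singleton y).compl, hπ.map_snd]
        gcongr
        exact twoPointMeasure_compl_singleton_le

/-- Mass of `η` on which `x` is cheaper by at least `ε` but which `π` sends to `y` costs at
least `ε` extra; at most `a` of that set can be sent to `x`. -/
lemma IsCoupling.integral_nearerCost_add_le (ha : 0 ≤ a) {ε : ℝ} (hε : 0 ≤ ε) :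
    ∫ z, nearerCost p x y z ∂η + ε * ((η {z | dist x z ^ p + ε ≤ dist y z ^ p}).toReal - a) ≤
      ∫ q, dist q.1 q.2 ^ p ∂π := by
  have := hπ.isProbabilityMeasure
  set A := {z | dist x z ^ p + ε ≤ dist y z ^ p}
  have hA : MeasurableSet A :=
    measurableSet_le ((measurable_dist_rpow p x).add_const ε) (measurable_dist_rpow p y)
  set excess := fun q : X × X => dist q.1 q.2 ^ p - nearerCost p x y q.1
  have hexcess : Integrable excess π :=
    (hπ.integrable_cost hmom).sub (hπ.integrable_comp_fst (integrable_nearerCost hmom))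
  have hmass : (η A).toReal - a ≤ (π (A ×ˢ {y})).toReal := by
    have := ENNReal.toReal_mono (by finiteness) (hπ.measure_le_measure_prod_singleton_add hA)
    rw [ENNReal.toReal_add (measure_ne_top _ _) ENNReal.ofReal_ne_top,
      ENNReal.toReal_ofReal ha] at this
    linarith
  have hgap : ∀ q ∈ A ×ˢ {y}, ε ≤ excess q := by
    rintro ⟨z, w⟩ ⟨hz, rfl : w = y⟩
    have : nearerCost p x w z = dist x z ^ p := min_eq_left (by linarith [hz.out])
    simp only [excess, this, dist_comm z]
    linarith [hz.out]
  calc ∫ z, nearerCost p x y z ∂η + ε * ((η A).toReal - a)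
      ≤ ∫ z, nearerCost p x y z ∂η + ε * (π (A ×ˢ {y})).toReal := by gcongr
    _ ≤ ∫ z, nearerCost p x y z ∂η + ∫ q in A ×ˢ {y}, excess q ∂π := by
        gcongr
        exact setIntegral_ge_of_const_le_real (hA.prod (measurableSet_singleton y))
          (measure_ne_top _ _) hgap hexcess.integrableOn
    _ ≤ ∫ z, nearerCost p x y z ∂η + ∫ q, excess q ∂π := by
        refine add_le_add_right (setIntegral_le_integral hexcess ?_) _
        filter_upwards [hπ.nearerCost_le_cost_ae] with q hq
        exact sub_nonneg.2 hq
    _ = ∫ q, dist q.1 q.2 ^ p ∂π := by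
        rw [integral_sub (hπ.integrable_cost hmom)
          (hπ.integrable_comp_fst (integrable_nearerCost hmom)),
          hπ.integral_comp_fst (integrable_nearerCost hmom).aestronglyMeasurable]
        ring

lemma IsCoupling.integral_nearerCost_le :
    ∫ z, nearerCost p x y z ∂η ≤ ∫ q, dist q.1 q.2 ^ p ∂π := by
  rw [← hπ.integral_comp_fst (integrable_nearerCost hmom).aestronglyMeasurable]
  exact integral_mono_ae (hπ.integrable_comp_fst (integrable_nearerCost hmom))
    (hπ.integrable_cost hmom) hπ.nearerCost_le_cost_ae

end TwoPointCoupling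

lemma integral_cost_splitCoupling [IsProbabilityMeasure η] {B : Set X} (hB : MeasurableSet B) :
    ∫ q, dist q.1 q.2 ^ p ∂splitCoupling η x y B =
      ∫ z in B, dist x z ^ p ∂η + ∫ z in Bᶜ, dist y z ^ p ∂η := by
  have hint := (isCoupling_splitCoupling (x := x) (y := y) hB).integrable_cost hmom
  rw [splitCoupling] at hint ⊢
  rw [integral_add_measure (hint.mono_measure (Measure.le_add_right le_rfl))
      (hint.mono_measure (Measure.le_add_left le_rfl)),
    (measurableEmbedding_prod_mk_right x).integral_map,
    (measurableEmbedding_prod_mk_right y).integral_map]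
  simp only [dist_comm]

lemma integral_nearerCost_eq (hp : 0 ≤ p) {B : Set X} (hB : MeasurableSet B)
    (hltB : {z | dist x z < dist y z} ⊆ B) (hBle : B ⊆ {z | dist x z ≤ dist y z}) :
    ∫ z, nearerCost p x y z ∂η = ∫ z in B, dist x z ^ p ∂η + ∫ z in Bᶜ, dist y z ^ p ∂η := by
  rw [← integral_add_compl hB (integrable_nearerCost hmom)]
  congr 1 <;> refine setIntegral_congr_fun (by measurability) fun z hz => ?_
  · exact min_eq_left (Real.rpow_le_rpow dist_nonneg (hBle hz) hp)
  · exact min_eq_right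
      (Real.rpow_le_rpow dist_nonneg (not_lt.1 fun h => hz (hltB h)) hp)

lemma integral_nearerCost_mem_couplingCosts (hp : 0 ≤ p) [IsProbabilityMeasure η]
    (ha₁ : (η {z | dist x z < dist y z}).toReal ≤ a)
    (ha₂ : a ≤ (η {z | dist x z ≤ dist y z}).toReal) :
    ∫ z, nearerCost p x y z ∂η ∈ couplingCosts p η (twoPointMeasure x y a) := by
  have hlt := measurableSet_dist_lt_dist x y
  have hle := measurableSet_dist_le_dist x y
  have h₁ := isCoupling_splitCoupling (μ := η) (x := x) (y := y) hlt
  have h₂ := isCoupling_splitCoupling (μ := η) (x := x) (y := y) hle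
  obtain ⟨s, t, hs, ht, hst, rfl⟩ := Icc_subset_segment (𝕜 := ℝ) ⟨ha₁, ha₂⟩
  have h := h₁.smul_add_smul h₂ hs ht hst
  rw [smul_twoPointMeasure_add_smul hs ht hst ⟨ENNReal.toReal_nonneg, measureReal_le_one⟩
    ⟨ENNReal.toReal_nonneg, measureReal_le_one⟩] at h
  refine ⟨_, h, ?_⟩
  rw [integral_add_measure ((h₁.integrable_cost hmom).smul_measure ENNReal.ofReal_ne_top)
      ((h₂.integrable_cost hmom).smul_measure ENNReal.ofReal_ne_top),
    integral_smul_measure, integral_smul_measure, ENNReal.toReal_ofReal hs,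
    ENNReal.toReal_ofReal ht, integral_cost_splitCoupling hmom hlt,
    integral_cost_splitCoupling hmom hle,
    ← integral_nearerCost_eq hmom hp hlt subset_rfl (ofPred_subset_ofPred.2 fun _ => le_of_lt),
    ← integral_nearerCost_eq hmom hp hle (ofPred_subset_ofPred.2 fun _ => le_of_lt) subset_rfl,
    ← add_smul, hst, one_smul]

lemma integral_nearerCost_le_sInf_couplingCosts [IsProbabilityMeasure η] (ha : a ∈ Icc (0 : ℝ) 1) :
    ∫ z, nearerCost p x y z ∂η ≤ sInf (couplingCosts p η (twoPointMeasure x y a)) :=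
  have := isProbabilityMeasure_twoPointMeasure x y ha
  le_csInf couplingCosts_nonempty fun _ ⟨_, hπ, hr⟩ => hr ▸ hπ.integral_nearerCost_le hmom

lemma integral_nearerCost_lt_sInf_couplingCosts_of_lt (hp : 0 < p) [IsProbabilityMeasure η]
    (ha : a ∈ Icc (0 : ℝ) 1) (h : a < (η {z | dist x z < dist y z}).toReal) :
    ∫ z, nearerCost p x y z ∂η < sInf (couplingCosts p η (twoPointMeasure x y a)) := by
  have := isProbabilityMeasure_twoPointMeasure x y ha
  have hpow : {z | dist x z < dist y z} = {z | dist x z ^ p < dist y z ^ p} := by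
    ext z
    exact (Real.rpow_lt_rpow_iff dist_nonneg dist_nonneg hp).symm
  rw [← ENNReal.ofReal_lt_iff_lt_toReal ha.1 (measure_ne_top _ _), hpow] at h
  obtain ⟨ε, hε, hεa⟩ := exists_pos_lt_measure_setOf_add_le η h
  rw [ENNReal.ofReal_lt_iff_lt_toReal ha.1 (measure_ne_top _ _)] at hεa
  calc ∫ z, nearerCost p x y z ∂η
      < ∫ z, nearerCost p x y z ∂η +
          ε * ((η {z | dist x z ^ p + ε ≤ dist y z ^ p}).toReal - a) :=
        lt_add_of_pos_right _ (mul_pos hε (sub_pos.2 hεa))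
    _ ≤ sInf (couplingCosts p η (twoPointMeasure x y a)) :=
        le_csInf couplingCosts_nonempty fun _ ⟨_, hπ, hr⟩ =>
          hr ▸ hπ.integral_nearerCost_add_le hmom ha.1 hε.le

lemma integral_nearerCost_lt_sInf_couplingCosts_of_gt (hp : 0 < p) [IsProbabilityMeasure η]
    (ha : a ∈ Icc (0 : ℝ) 1) (h : (η {z | dist x z ≤ dist y z}).toReal < a) :
    ∫ z, nearerCost p x y z ∂η < sInf (couplingCosts p η (twoPointMeasure x y a)) := by
  rw [twoPointMeasure_comm, nearerCost_comm]
  refine integral_nearerCost_lt_sInf_couplingCosts_of_lt hmom hp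
    ⟨sub_nonneg.2 ha.2, sub_le_self _ ha.1⟩ ?_
  have hcompl : {z | dist y z < dist x z} = {z | dist x z ≤ dist y z}ᶜ := by
    ext z
    simp
  rw [hcompl, ← measureReal_def, probReal_compl_eq_one_sub (measurableSet_dist_le_dist x y)]
  exact sub_lt_sub_left h 1

lemma sInf_couplingCosts_eq_integral_nearerCost_iff (hp : 0 < p) [IsProbabilityMeasure η]
    (ha : a ∈ Icc (0 : ℝ) 1) :
    sInf (couplingCosts p η (twoPointMeasure x y a)) = ∫ z, nearerCost p x y z ∂η ↔
      (η {z | dist x z < dist y z}).toReal ≤ a ∧ a ≤ (η {z | dist x z ≤ dist y z}).toReal := by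
  refine ⟨fun h => ⟨not_lt.1 fun hlt => ?_, not_lt.1 fun hgt => ?_⟩, fun ⟨h₁, h₂⟩ => ?_⟩
  · exact (integral_nearerCost_lt_sInf_couplingCosts_of_lt hmom hp ha hlt).ne' h
  · exact (integral_nearerCost_lt_sInf_couplingCosts_of_gt hmom hp ha hgt).ne' h
  · refine le_antisymm (csInf_le ⟨_, fun _ ⟨_, hπ, hr⟩ => hr ▸ hπ.integral_nearerCost_le hmom⟩
      (integral_nearerCost_mem_couplingCosts hmom hp.le h₁ h₂)) ?_
    exact integral_nearerCost_le_sInf_couplingCosts hmom ha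

end Metric

theorem wasserstein_two_point_projection_general {X : Type*} [MetricSpace X]
    [MeasurableSpace X] [BorelSpace X]
    {p : ℝ} (hp : 1 ≤ p) {x y : X}
    (η : Measure X) (hη : IsProbabilityMeasure η)
    (hmom : ∀ x0 : X, HasFiniteIntegral (fun z => dist z x0 ^ p) η)
    {α : ℝ} (hα : α ∈ Set.Icc (0 : ℝ) 1) :
    wassersteinDist dist p η (twoPointMeasure x y α) =
        sInf {d : ℝ | ∃ a ∈ Set.Icc (0 : ℝ) 1,
          d = wassersteinDist dist p η (twoPointMeasure x y a)} ↔
      (η {z | dist x z < dist y z}).toReal ≤ α ∧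
        α ≤ (η {z | dist x z ≤ dist y z}).toReal := by
  have hp₀ : 0 < p := by linarith
  have hL : 0 ≤ ∫ z, nearerCost p x y z ∂η := integral_nonneg (nearerCost_nonneg p x y)
  have hm : (η {z | dist x z < dist y z}).toReal ∈ Icc (0 : ℝ) 1 :=
    ⟨ENNReal.toReal_nonneg, measureReal_le_one⟩
  have hmM : (η {z | dist x z < dist y z}).toReal ≤ (η {z | dist x z ≤ dist y z}).toReal :=
    measureReal_mono (ofPred_subset_ofPred.2 fun _ => le_of_lt)
  have hinf : sInf {d : ℝ | ∃ a ∈ Icc (0 : ℝ) 1,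
      d = wassersteinDist dist p η (twoPointMeasure x y a)} =
        (∫ z, nearerCost p x y z ∂η) ^ (1 / p) := by
    refine IsLeast.csInf_eq ⟨⟨_, hm, ?_⟩, ?_⟩
    · rw [wassersteinDist_eq_sInf_couplingCosts,
        (sInf_couplingCosts_eq_integral_nearerCost_iff hmom hp₀ hm).2 ⟨le_rfl, hmM⟩]
    · rintro _ ⟨a, ha, rfl⟩
      rw [wassersteinDist_eq_sInf_couplingCosts]
      exact Real.rpow_le_rpow hL (integral_nearerCost_le_sInf_couplingCosts hmom ha)
        (by positivity)
  rw [hinf, wassersteinDist_eq_sInf_couplingCosts,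
    Real.rpow_left_inj (hL.trans (integral_nearerCost_le_sInf_couplingCosts hmom hα)) hL
      (by positivity), sInf_couplingCosts_eq_integral_nearerCost_iff hmom hp₀ hα]

/-- `α δ_x + (1-α) δ_y` minimizes the `p`-Wasserstein distance from `η` among
measures of the form `a δ_x + (1-a) δ_y`, `a ∈ [0,1]`, if and only if
`η({z : r(x,z) < r(y,z)}) ≤ α ≤ η({z : r(x,z) ≤ r(y,z)})`. -/
theorem wasserstein_two_point_projection {X : Type*} [MetricSpace X] [CompleteSpace X]
    [TopologicalSpace.SeparableSpace X] [MeasurableSpace X] [BorelSpace X]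
    {p : ℝ} (hp : 1 ≤ p) {x y : X} (hxy : x ≠ y)
    (η : Measure X) (hη : IsProbabilityMeasure η)
    (hmom : ∀ x0 : X, HasFiniteIntegral (fun z => dist z x0 ^ p) η)
    {α : ℝ} (hα : α ∈ Set.Icc (0 : ℝ) 1) :
    wassersteinDist dist p η (twoPointMeasure x y α) =
        sInf {d : ℝ | ∃ a ∈ Set.Icc (0 : ℝ) 1,
          d = wassersteinDist dist p η (twoPointMeasure x y a)} ↔
      (η {z | dist x z < dist y z}).toReal ≤ α ∧
        α ≤ (η {z | dist x z ≤ dist y z}).toReal :=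
  wasserstein_two_point_projection_general hp η hη hmom hα
end
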